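/- If a freely reduced word π is a piece of rank i, then the freely reduced words representing φ(π) and φ^{-1}(π) are also pieces of rank i and have the same type as π. -/

import Mathlib

open FreeGroup SemidirectProduct

/-- Words on the letters `a₁^{±1}, …, a_m^{±1}` (`(i, true)` is `a_{i+1}`,
`(i, false)` is `a_{i+1}⁻¹`, with 0-based `Fin`-indexing of the generators). -/
abbrev FWord (m : ℕ) := List (Fin m × Bool)

/-- A word is freely reduced. -/
def Reduced {m : ℕ} (w : FWord m) : Prop := FreeGroup.reduce w = w

/-- `φ` is the automorphism of `F = F(a₁, …, a_m)` with `φ(a₁) = a₁` and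
`φ(aᵢ) = aᵢ aᵢ₋₁` for `2 ≤ i ≤ m`. -/
def IsHydraAut (m : ℕ) (φ : FreeGroup (Fin m) ≃* FreeGroup (Fin m)) : Prop :=
  ∀ i : Fin m, φ (FreeGroup.of i) =
    if i.val = 0 then FreeGroup.of i
    else FreeGroup.of i *
      FreeGroup.of (⟨i.val - 1, Nat.lt_of_le_of_lt (Nat.sub_le _ _) i.isLt⟩ : Fin m)

/-- The free-by-cyclic group `H_m = F ⋊_φ ℤ`; here `s = inr (ofAdd 1)` and the defining
relation `s⁻¹ aᵢ s = φ(aᵢ)` holds.  The normal form `ũ s^p` is the element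
`⟨ũ, Multiplicative.ofAdd p⟩`. -/
abbrev Hgrp (m : ℕ) (φ : FreeGroup (Fin m) ≃* FreeGroup (Fin m)) :=
  FreeGroup (Fin m) ⋊[zpowersHom (MulAut (FreeGroup (Fin m))) φ⁻¹] Multiplicative ℤ

/-- Letters of words over the generators of `H_m`: `some i` is `a_{i+1}`, `none` is `s`. -/
abbrev HWord (m : ℕ) := List (Option (Fin m) × Bool)

def hLetter {m : ℕ} (φ : FreeGroup (Fin m) ≃* FreeGroup (Fin m)) (x : Option (Fin m) × Bool) :
    Hgrp m φ :=
  match x.1 with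
  | some i => cond x.2 (SemidirectProduct.inl (FreeGroup.of i))
      (SemidirectProduct.inl (FreeGroup.of i))⁻¹
  | none => cond x.2 (SemidirectProduct.inr (Multiplicative.ofAdd (1:ℤ)))
      (SemidirectProduct.inr (Multiplicative.ofAdd (1:ℤ)))⁻¹

/-- The element of `H_m` represented by a word on `a₁^{±1}, …, a_m^{±1}, s^{±1}`. -/
def evalH {m : ℕ} (φ : FreeGroup (Fin m) ≃* FreeGroup (Fin m)) (w : HWord m) : Hgrp m φ :=
  (w.map (hLetter φ)).prod

/-- Word length in `H_m` w.r.t. the generating set `{a₁, …, a_m, s}`. -/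
noncomputable def lenH {m : ℕ} (φ : FreeGroup (Fin m) ≃* FreeGroup (Fin m)) (g : Hgrp m φ) : ℕ :=
  sInf {n | ∃ w : HWord m, evalH φ w = g ∧ w.length = n}

/-- Word length in `F` w.r.t. the generating set `{a₁, …, a_m}`. -/
noncomputable def lenF {m : ℕ} (g : FreeGroup (Fin m)) : ℕ :=
  sInf {n | ∃ w : FWord m, FreeGroup.mk w = g ∧ w.length = n}

/-- The rank of a word: the maximal `i` such that `aᵢ^{±1}` occurs in it (a letter with
`Fin`-index `j` is `a_{j+1}`, so it contributes `j+1`); the empty word has rank `0`. -/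
def wrank {m : ℕ} (w : FWord m) : ℕ := (w.map (fun x => x.1.val + 1)).foldr max 0

/-- The four types of rank-`i` pieces: `aᵢ u`, `u aᵢ⁻¹`, `aᵢ u aᵢ⁻¹`, `u`. -/
inductive PieceType | head | tail | both | plain
deriving DecidableEq

/-- `π` is a rank-`i` piece of the given type: `aᵢ u`, `u aᵢ⁻¹`, `aᵢ u aᵢ⁻¹` or `u`,
where `u` is a (possibly empty) word of rank at most `i - 1`.  Pieces of the first three
types have strict rank `i`. -/
def IsPieceType {m : ℕ} (i : ℕ) (t : PieceType) (π : FWord m) : Prop :=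
  match t with
  | .head => ∃ (x : Fin m × Bool) (u : FWord m),
      π = x :: u ∧ x.1.val + 1 = i ∧ x.2 = true ∧ wrank u < i
  | .tail => ∃ (x : Fin m × Bool) (u : FWord m),
      π = u ++ [x] ∧ x.1.val + 1 = i ∧ x.2 = false ∧ wrank u < i
  | .both => ∃ (j : Fin m) (u : FWord m),
      π = (j, true) :: (u ++ [(j, false)]) ∧ j.val + 1 = i ∧ wrank u < i
  | .plain => wrank π < i

def IsPiece {m : ℕ} (i : ℕ) (π : FWord m) : Prop := ∃ t, IsPieceType i t π

/-- The rank-`i` piece decomposition of `w`: a decomposition into rank-`i` pieces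
with the minimal possible number of pieces. -/
def IsPieceDecomp {m : ℕ} (i : ℕ) (w : FWord m) (L : List (FWord m)) : Prop :=
  L.flatten = w ∧ (∀ π ∈ L, IsPiece i π) ∧
    ∀ L' : List (FWord m), L'.flatten = w → (∀ π ∈ L', IsPiece i π) → L.length ≤ L'.length

/-- The number of pieces in the rank-`i` decomposition of `w`, for `i = wrank w`. -/
noncomputable def piecesCount {m : ℕ} (w : FWord m) : ℕ :=
  sInf {p | ∃ L : List (FWord m),
    L.flatten = w ∧ (∀ π ∈ L, IsPiece (wrank w) π) ∧ L.length = p}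

/-- The number of pieces of an element of the free group. -/
noncomputable def piecesCountF {m : ℕ} (g : FreeGroup (Fin m)) : ℕ :=
  piecesCount (FreeGroup.toWord g)

/-!
Both `φ` and `φ⁻¹` are unitriangular: they send `a_j` into `a_j F_{j-1}`, where
`F_k = ⟨a₁, …, a_k⟩` (for `φ⁻¹` this follows by induction on `j`). Hence they preserve every
`F_k`, and the pieces `aᵢ u`, `u aᵢ⁻¹`, `aᵢ u aᵢ⁻¹` with `u ∈ F_{i-1}` go to elements
`aᵢ u'`, `u' aᵢ⁻¹`, `aᵢ u' aᵢ⁻¹` with `u' ∈ F_{i-1}`. Since the reduced word of `u'` contains no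
letter `aᵢ^{±1}`, nothing cancels against the outer letters, so the reduced word is again a piece
of the same type.
-/

namespace FreeGroup

variable {α : Type*}

theorem mk_mem_closure_image_of {S : Set α} :
    ∀ {L : List (α × Bool)}, (∀ x ∈ L, x.1 ∈ S) → mk L ∈ Subgroup.closure (of '' S)
  | [], _ => one_mem _
  | (a, b) :: L, h => by
    have hL : mk L ∈ Subgroup.closure (of '' S) :=
      mk_mem_closure_image_of fun x hx => h x (List.mem_cons_of_mem _ hx)
    have ha : of a ∈ Subgroup.closure (of '' S) :=
      Subgroup.subset_closure ⟨a, h _ List.mem_cons_self, rfl⟩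
    have hsplit : mk ((a, b) :: L) = mk [(a, b)] * mk L := by rw [mul_mk]; rfl
    rw [hsplit]
    refine mul_mem ?_ hL
    cases b
    · have : mk [(a, false)] = (of a)⁻¹ := by rw [of, inv_mk]; rfl
      exact this ▸ inv_mem ha
    · exact ha

variable [DecidableEq α]

theorem mem_closure_image_of_iff {S : Set α} {g : FreeGroup α} :
    g ∈ Subgroup.closure (of '' S) ↔ ∀ x ∈ g.toWord, x.1 ∈ S := by
  refine ⟨fun hg => ?_, fun h => mk_toWord (x := g) ▸ mk_mem_closure_image_of h⟩
  induction hg using Subgroup.closure_induction with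
  | mem _ h =>
    obtain ⟨a, ha, rfl⟩ := h
    simpa [toWord_of] using ha
  | one => simp
  | mul x y _ _ hx hy =>
    intro z hz
    rcases List.mem_append.1 ((toWord_mul_sublist x y).subset hz) with hz | hz
    exacts [hx z hz, hy z hz]
  | inv x _ hx =>
    intro z hz
    rw [toWord_inv, invRev, List.mem_reverse, List.mem_map] at hz
    obtain ⟨w, hw, rfl⟩ := hz
    exact hx w hw

theorem toWord_mul_of_isReduced {x y : FreeGroup α} (h : IsReduced (x.toWord ++ y.toWord)) :
    (x * y).toWord = x.toWord ++ y.toWord := by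
  rw [toWord_mul, h.reduce_eq]

theorem toWord_of_mul {a : α} {g : FreeGroup α} (hg : ∀ y ∈ g.toWord.head?, y.1 ≠ a) :
    (of a * g).toWord = (a, true) :: g.toWord := by
  refine toWord_mul_of_isReduced ?_
  rw [toWord_of]
  exact isReduced_toWord.cons fun y hy h => absurd h.symm (hg y hy)

theorem toWord_mul_of_inv {a : α} {g : FreeGroup α} (hg : ∀ y ∈ g.toWord.getLast?, y.1 ≠ a) :
    (g * (of a)⁻¹).toWord = g.toWord ++ [(a, false)] := by
  have hinv : (of a)⁻¹.toWord = [(a, false)] := by simp [toWord_inv, invRev]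
  have hred : IsReduced (g.toWord ++ [(a, false)]) :=
    isReduced_toWord.append (.singleton _) fun y hy x hx h => by
      obtain rfl : (a, false) = x := Option.mem_some_iff.1 hx
      exact absurd h (hg y hy)
  rw [toWord_mul_of_isReduced (hinv ▸ hred), hinv]

theorem toWord_of_mul_mul_inv {a : α} {g : FreeGroup α} (hg : ∀ y ∈ g.toWord, y.1 ≠ a)
    (hg1 : g ≠ 1) : (of a * g * (of a)⁻¹).toWord = (a, true) :: (g.toWord ++ [(a, false)]) := by
  have hne : g.toWord ≠ [] := mt toWord_eq_nil_iff.1 hg1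
  rw [mul_assoc, toWord_of_mul, toWord_mul_of_inv]
  · exact fun y hy => hg y (List.mem_of_mem_getLast? hy)
  · rw [toWord_mul_of_inv (fun y hy => hg y (List.mem_of_mem_getLast? hy)),
      List.head?_append_of_ne_nil _ hne]
    exact fun y hy => hg y (List.mem_of_mem_head? hy)

end FreeGroup

section Rank

variable {m : ℕ}

theorem wrank_le_iff {w : FWord m} {k : ℕ} : wrank w ≤ k ↔ ∀ x ∈ w, x.1.val < k := by
  induction w with
  | nil => simp [wrank]
  | cons a w ih =>
    simp only [wrank, List.map_cons, List.foldr_cons, max_le_iff, List.forall_mem_cons] at ih ⊢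
    rw [ih, Nat.succ_le_iff]

/-- The paper's `F_k = ⟨a₁, …, a_k⟩`: with 0-based `Fin` indices, the generators `a` with
`a.val < k`. -/
def rankLE (k : ℕ) : Subgroup (FreeGroup (Fin m)) :=
  Subgroup.closure (of '' {a | a.val < k})

theorem mem_rankLE_iff {k : ℕ} {g : FreeGroup (Fin m)} : g ∈ rankLE k ↔ wrank g.toWord ≤ k := by
  rw [rankLE, mem_closure_image_of_iff, wrank_le_iff]
  rfl

theorem mk_mem_rankLE {k : ℕ} {w : FWord m} (h : wrank w ≤ k) : mk w ∈ rankLE k :=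
  mk_mem_closure_image_of (wrank_le_iff.1 h)

theorem rankLE_mono {k l : ℕ} (h : k ≤ l) : rankLE (m := m) k ≤ rankLE l :=
  Subgroup.closure_mono (Set.image_mono fun _ ha => lt_of_lt_of_le ha h)

theorem ne_of_mem_toWord_of_mem_rankLE {j : Fin m} {g : FreeGroup (Fin m)}
    (hg : g ∈ rankLE j.val) : ∀ y ∈ g.toWord, y.1 ≠ j :=
  fun y hy => Fin.ne_of_lt (mem_closure_image_of_iff.1 hg y hy)

theorem map_rankLE_le {ψ : FreeGroup (Fin m) →* FreeGroup (Fin m)} {k : ℕ}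
    (h : ∀ j : Fin m, j.val < k → (of j)⁻¹ * ψ (of j) ∈ rankLE j.val) :
    (rankLE k).map ψ ≤ rankLE k := by
  rw [rankLE, MonoidHom.map_closure, Subgroup.closure_le]
  rintro _ ⟨_, ⟨j, hj, rfl⟩, rfl⟩
  have hof : of j ∈ rankLE k := Subgroup.subset_closure ⟨j, hj, rfl⟩
  have := mul_mem hof (rankLE_mono hj.le (h j hj))
  rwa [mul_inv_cancel_left] at this

end Rank

section Unitriangular

variable {m : ℕ}

def IsUnitriangular (ψ : FreeGroup (Fin m) ≃* FreeGroup (Fin m)) : Prop :=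
  ∀ j : Fin m, (of j)⁻¹ * ψ (of j) ∈ rankLE j.val

namespace IsUnitriangular

variable {ψ : FreeGroup (Fin m) ≃* FreeGroup (Fin m)}

theorem map_mem_rankLE (hψ : IsUnitriangular ψ) {k : ℕ} {g : FreeGroup (Fin m)}
    (hg : g ∈ rankLE k) : ψ g ∈ rankLE k :=
  map_rankLE_le (ψ := ψ.toMonoidHom) (fun j _ => hψ j) ⟨g, hg, rfl⟩

theorem exists_map_of (hψ : IsUnitriangular ψ) (j : Fin m) :
    ∃ c ∈ rankLE j.val, ψ (of j) = of j * c :=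
  ⟨_, hψ j, (mul_inv_cancel_left _ _).symm⟩

theorem inv (hψ : IsUnitriangular ψ) : IsUnitriangular ψ⁻¹ := by
  intro j
  induction j using WellFoundedLT.induction with
  | ind j ih =>
    -- `ψ⁻¹` preserves `F_{j-1}` by induction, and `ψ⁻¹ (a_j) = a_j · ψ⁻¹(a_j⁻¹ ψ(a_j))⁻¹`.
    have hmap : ∀ g ∈ rankLE j.val, ψ⁻¹ g ∈ rankLE j.val := fun g hg =>
      map_rankLE_le (ψ := MulEquiv.toMonoidHom ψ⁻¹) (fun a ha => ih a ha) ⟨g, hg, rfl⟩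
    have hrw : (of j)⁻¹ * ψ⁻¹ (of j) = (ψ⁻¹ ((of j)⁻¹ * ψ (of j)))⁻¹ := by simp
    rw [hrw]
    exact inv_mem (hmap _ (hψ j))

end IsUnitriangular

theorem isUnitriangular_of_isHydraAut {φ : FreeGroup (Fin m) ≃* FreeGroup (Fin m)}
    (hφ : IsHydraAut m φ) : IsUnitriangular φ := by
  intro j
  rw [hφ j]
  split_ifs with hj
  · simp
  · rw [inv_mul_cancel_left]
    exact Subgroup.subset_closure ⟨_, Nat.sub_one_lt hj, rfl⟩

end Unitriangular

section Pieces

variable {m : ℕ}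

/-- In the `both` case `h ≠ 1`, because `aᵢ aᵢ⁻¹` is not reduced. -/
def IsPieceTypeElem (i : ℕ) (t : PieceType) (g : FreeGroup (Fin m)) : Prop :=
  match t with
  | .head => ∃ j : Fin m, j.val + 1 = i ∧ ∃ h ∈ rankLE j.val, g = of j * h
  | .tail => ∃ j : Fin m, j.val + 1 = i ∧ ∃ h ∈ rankLE j.val, g = h * (of j)⁻¹
  | .both => ∃ j : Fin m, j.val + 1 = i ∧ ∃ h ∈ rankLE j.val, h ≠ 1 ∧ g = of j * h * (of j)⁻¹
  | .plain => 0 < i ∧ g ∈ rankLE (i - 1)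

theorem isPieceType_toWord_iff {i : ℕ} {t : PieceType} {g : FreeGroup (Fin m)} :
    IsPieceType i t g.toWord ↔ IsPieceTypeElem i t g := by
  cases t with
  | head =>
    constructor
    · rintro ⟨⟨j, b⟩, u, hw, rfl, rfl, hu⟩
      refine ⟨j, rfl, mk u, mk_mem_rankLE (Nat.le_of_lt_succ hu), ?_⟩
      rw [← mk_toWord (x := g), hw]
      rfl
    · rintro ⟨j, rfl, h, hh, rfl⟩
      exact ⟨(j, true), h.toWord,
        toWord_of_mul fun y hy =>
          ne_of_mem_toWord_of_mem_rankLE hh y (List.mem_of_mem_head? hy),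
        rfl, rfl, Nat.lt_succ_of_le (mem_rankLE_iff.1 hh)⟩
  | tail =>
    constructor
    · rintro ⟨⟨j, b⟩, u, hw, rfl, rfl, hu⟩
      refine ⟨j, rfl, mk u, mk_mem_rankLE (Nat.le_of_lt_succ hu), ?_⟩
      rw [← mk_toWord (x := g), hw]
      rfl
    · rintro ⟨j, rfl, h, hh, rfl⟩
      exact ⟨(j, false), h.toWord,
        toWord_mul_of_inv fun y hy =>
          ne_of_mem_toWord_of_mem_rankLE hh y (List.mem_of_mem_getLast? hy),
        rfl, rfl, Nat.lt_succ_of_le (mem_rankLE_iff.1 hh)⟩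
  | both =>
    constructor
    · rintro ⟨j, u, hw, rfl, hu⟩
      have hg : g = of j * mk u * (of j)⁻¹ := by
        rw [← mk_toWord (x := g), hw]
        rfl
      refine ⟨j, rfl, mk u, mk_mem_rankLE (Nat.le_of_lt_succ hu), fun hu1 => ?_, hg⟩
      rw [hu1, mul_one, mul_inv_cancel] at hg
      simp [hg] at hw
    · rintro ⟨j, rfl, h, hh, hne, rfl⟩
      exact ⟨j, h.toWord, toWord_of_mul_mul_inv (ne_of_mem_toWord_of_mem_rankLE hh) hne,
        rfl, Nat.lt_succ_of_le (mem_rankLE_iff.1 hh)⟩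
  | plain =>
    change wrank g.toWord < i ↔ 0 < i ∧ g ∈ rankLE (i - 1)
    rw [mem_rankLE_iff]
    omega

theorem IsUnitriangular.isPieceTypeElem_map {ψ : FreeGroup (Fin m) ≃* FreeGroup (Fin m)}
    (hψ : IsUnitriangular ψ) {i : ℕ} {t : PieceType} {g : FreeGroup (Fin m)}
    (hg : IsPieceTypeElem i t g) : IsPieceTypeElem i t (ψ g) := by
  cases t with
  | head =>
    obtain ⟨j, hj, h, hh, rfl⟩ := hg
    obtain ⟨c, hc, hψj⟩ := hψ.exists_map_of j
    exact ⟨j, hj, c * ψ h, mul_mem hc (hψ.map_mem_rankLE hh), by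
      rw [_root_.map_mul, hψj, mul_assoc]⟩
  | tail =>
    obtain ⟨j, hj, h, hh, rfl⟩ := hg
    obtain ⟨c, hc, hψj⟩ := hψ.exists_map_of j
    exact ⟨j, hj, ψ h * c⁻¹, mul_mem (hψ.map_mem_rankLE hh) (inv_mem hc), by
      rw [_root_.map_mul, _root_.map_inv, hψj]; group⟩
  | both =>
    obtain ⟨j, hj, h, hh, hne, rfl⟩ := hg
    obtain ⟨c, hc, hψj⟩ := hψ.exists_map_of j
    refine ⟨j, hj, c * ψ h * c⁻¹, mul_mem (mul_mem hc (hψ.map_mem_rankLE hh)) (inv_mem hc),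
      ?_, by rw [_root_.map_mul, _root_.map_mul, _root_.map_inv, hψj]; group⟩
    simpa [conj_eq_one_iff] using hne
  | plain => exact ⟨hg.1, hψ.map_mem_rankLE hg.2⟩

end Pieces

theorem stmt_4_general (m : ℕ)
    (φ : FreeGroup (Fin m) ≃* FreeGroup (Fin m)) (hφ : IsHydraAut m φ)
    (i : ℕ) (t : PieceType) (π : FWord m)
    (hred : Reduced π) (hpiece : IsPieceType i t π) :
    IsPieceType i t (FreeGroup.toWord (φ (FreeGroup.mk π))) ∧
    IsPieceType i t (FreeGroup.toWord (φ⁻¹ (FreeGroup.mk π))) := by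
  have hψ := isUnitriangular_of_isHydraAut hφ
  rw [← toWord_mk.trans hred, isPieceType_toWord_iff] at hpiece
  rw [isPieceType_toWord_iff, isPieceType_toWord_iff]
  exact ⟨hψ.isPieceTypeElem_map hpiece, hψ.inv.isPieceTypeElem_map hpiece⟩

/-- Lemma 3.1: if a reduced word `π` is a piece of rank `i`, then the
reduced words representing `φ(π)` and `φ⁻¹(π)` are pieces of rank `i` of the same type. -/
theorem stmt_4 (m : ℕ) (hm : 2 ≤ m)
    (φ : FreeGroup (Fin m) ≃* FreeGroup (Fin m)) (hφ : IsHydraAut m φ)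
    (i : ℕ) (t : PieceType) (π : FWord m)
    (hred : Reduced π) (hpiece : IsPieceType i t π) :
    IsPieceType i t (FreeGroup.toWord (φ (FreeGroup.mk π))) ∧
    IsPieceType i t (FreeGroup.toWord (φ⁻¹ (FreeGroup.mk π))) :=
  stmt_4_general m φ hφ i t π hred hpiece
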